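/- Let M be a smooth manifold without boundary modeled on a real Banach space. If Φ, Ψ : 𝒟 → M are two smooth local flows defined on the same open domain 𝒟 ⊆ ℝ × M and having the same velocity field, then Φ = Ψ. -/

import Mathlib

open scoped Manifold
open Set

/-- A smooth local flow on a manifold `M` modeled on a real Banach space `E`:
a smooth map `Φ` defined on an open set `D ⊆ ℝ × M` containing `{0} × M`, whose slices
`I_x = {t | (t, x) ∈ D}` are intervals containing `0`, with `Φ (0, x) = x` and
`Φ (t, Φ (s, x)) = Φ (s + t, x)` whenever all relevant points lie in `D`. -/
structure IsLocalFlow {E : Type*} [NormedAddCommGroup E] [NormedSpace ℝ E]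
    {M : Type*} [TopologicalSpace M] [ChartedSpace E M]
    (Φ : ℝ × M → M) (D : Set (ℝ × M)) : Prop where
  isOpen_dom : IsOpen D
  zero_mem : ∀ x : M, (0, x) ∈ D
  ordConnected_slice : ∀ x : M, Set.OrdConnected {t : ℝ | (t, x) ∈ D}
  smoothOn : ContMDiffOn ((𝓘(ℝ, ℝ)).prod 𝓘(ℝ, E)) 𝓘(ℝ, E) (⊤ : ℕ∞) Φ D
  map_zero : ∀ x : M, Φ (0, x) = x
  comp : ∀ (s t : ℝ) (x : M), (s, x) ∈ D → (t, Φ (s, x)) ∈ D → (s + t, x) ∈ D →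
    Φ (t, Φ (s, x)) = Φ (s + t, x)

/-- `X` is the velocity field of the local flow `Φ`:
`X x = (d/dt)|₀ Φ (t, x)` for every `x`. -/
def IsVelocityField {E : Type*} [NormedAddCommGroup E] [NormedSpace ℝ E]
    {M : Type*} [TopologicalSpace M] [ChartedSpace E M]
    (X : (x : M) → TangentSpace 𝓘(ℝ, E) x) (Φ : ℝ × M → M) : Prop :=
  ∀ x : M, HasMFDerivAt 𝓘(ℝ, ℝ) 𝓘(ℝ, E) (fun t => Φ (t, x)) 0
    ((1 : ℝ →L[ℝ] ℝ).smulRight (X x))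

/-- The curve `t ↦ Φ (t, x)` of a local flow with velocity field `X` is an integral curve of `X`
on the slice `{t | (t, x) ∈ D}`. -/
theorem IsLocalFlow.isIntegralCurveOn_slice
    {E : Type*} [NormedAddCommGroup E] [NormedSpace ℝ E]
    {M : Type*} [TopologicalSpace M] [ChartedSpace E M]
    [IsManifold 𝓘(ℝ, E) (⊤ : ℕ∞) M]
    {Φ : ℝ × M → M} {D : Set (ℝ × M)} (hΦ : IsLocalFlow (E := E) Φ D)
    {X : (x : M) → TangentSpace 𝓘(ℝ, E) x} (hXΦ : IsVelocityField X Φ) (x : M) :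
    IsMIntegralCurveOn (fun t => Φ (t, x)) X {t : ℝ | (t, x) ∈ D} := by
  intro s₀ hs₀
  have hy := hXΦ (Φ (s₀, x))
  have h1 : HasMFDerivAt 𝓘(ℝ, ℝ) 𝓘(ℝ, ℝ) (fun t : ℝ => t - s₀) s₀
      (ContinuousLinearMap.id ℝ ℝ) := by
    apply HasFDerivAt.hasMFDerivAt
    exact (hasFDerivAt_id s₀).sub_const s₀
  have h2 : HasMFDerivAt 𝓘(ℝ, ℝ) 𝓘(ℝ, E)
      ((fun u => Φ (u, Φ (s₀, x))) ∘ (fun t : ℝ => t - s₀)) s₀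
      (((1 : ℝ →L[ℝ] ℝ).smulRight (X (Φ (s₀, x)))).comp (ContinuousLinearMap.id ℝ ℝ)) := by
    apply HasMFDerivAt.comp (I' := 𝓘(ℝ, ℝ)) s₀ _ h1
    rw [sub_self]; exact hy
  change HasMFDerivAt 𝓘(ℝ, ℝ) 𝓘(ℝ, E) ((fun u => Φ (u, Φ (s₀, x))) ∘ (fun t : ℝ => t - s₀)) s₀ ((1 : ℝ →L[ℝ] ℝ).smulRight (X (Φ (s₀, x)))) at h2
  apply HasMFDerivAt.hasMFDerivWithinAt
  apply h2.congr_of_eventuallyEq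
  have hD : IsOpen D := hΦ.isOpen_dom
  have hmem1 : ∀ᶠ t in nhds s₀, (t, x) ∈ D := by
    have : Continuous fun t : ℝ => ((t, x) : ℝ × M) := by fun_prop
    exact this.continuousAt.preimage_mem_nhds (hD.mem_nhds hs₀)
  have hmem2 : ∀ᶠ t in nhds s₀, (t - s₀, Φ (s₀, x)) ∈ D := by
    have hc : Continuous fun t : ℝ => ((t - s₀, Φ (s₀, x)) : ℝ × M) := by fun_prop
    have h0 : ((s₀ - s₀ : ℝ), Φ (s₀, x)) ∈ D := by
      simpa using hΦ.zero_mem (Φ (s₀, x))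
    exact hc.continuousAt.preimage_mem_nhds (by simpa using hD.mem_nhds h0)
  filter_upwards [hmem1, hmem2] with t h1t h2t
  have := hΦ.comp s₀ (t - s₀) x hs₀ h2t (by simpa using h1t)
  simpa using this.symm

/-- The velocity field of a smooth local flow is a `C¹` vector field. -/
theorem IsLocalFlow.contMDiff_velocityField
    {E : Type*} [NormedAddCommGroup E] [NormedSpace ℝ E]
    {M : Type*} [TopologicalSpace M] [ChartedSpace E M]
    [IsManifold 𝓘(ℝ, E) (⊤ : ℕ∞) M]
    {Φ : ℝ × M → M} {D : Set (ℝ × M)} (hΦ : IsLocalFlow (E := E) Φ D)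
    {X : (x : M) → TangentSpace 𝓘(ℝ, E) x} (hXΦ : IsVelocityField X Φ) :
    ContMDiff 𝓘(ℝ, E) 𝓘(ℝ, E).tangent 1
      (fun x => (⟨x, X x⟩ : TangentBundle 𝓘(ℝ, E) M)) := by
  intro x₀
  have hf : ContMDiffAt ((𝓘(ℝ, E)).prod 𝓘(ℝ, ℝ)) 𝓘(ℝ, E) 2
      (Function.uncurry fun (x : M) (t : ℝ) => Φ (t, x)) (x₀, (0:ℝ)) := by
    have hswap : ContMDiff ((𝓘(ℝ, E)).prod 𝓘(ℝ, ℝ)) ((𝓘(ℝ, ℝ)).prod 𝓘(ℝ, E)) (⊤ : ℕ∞)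
        (fun p : M × ℝ => (p.2, p.1)) := contMDiff_snd.prodMk contMDiff_fst
    have : ContMDiffAt ((𝓘(ℝ, ℝ)).prod 𝓘(ℝ, E)) 𝓘(ℝ, E) (⊤ : ℕ∞) Φ ((0:ℝ), x₀) :=
      hΦ.smoothOn.contMDiffAt (hΦ.isOpen_dom.mem_nhds (hΦ.zero_mem x₀))
    exact (this.comp (x₀, (0:ℝ)) (hswap.contMDiffAt)).of_le (by exact WithTop.coe_le_coe.mpr (le_top : (2:ℕ∞) ≤ ⊤))
  have key := hf.mfderiv (fun x t => Φ (t, x)) (fun _ => (0:ℝ))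
    contMDiffAt_const (le_of_eq (by norm_num) : (1:WithTop ℕ∞) + 1 ≤ 2)
  rw [Bundle.contMDiffAt_section]
  have happ : ContMDiffAt 𝓘(ℝ, E) 𝓘(ℝ, E) 1
      (fun x => (inTangentCoordinates 𝓘(ℝ, ℝ) 𝓘(ℝ, E) (fun _ => (0:ℝ))
        (fun x => Φ (0, x)) (fun x => mfderiv 𝓘(ℝ, ℝ) 𝓘(ℝ, E) (fun t => Φ (t, x)) 0) x₀ x) 1)
      x₀ := key.clm_apply contMDiffAt_const
  apply happ.congr_of_eventuallyEq
  have hmemchart : ∀ᶠ x in nhds x₀, x ∈ (chartAt E x₀).source :=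
    (chartAt E x₀).open_source.mem_nhds (mem_chart_source E x₀)
  filter_upwards [hmemchart] with x hx
  have hmf : mfderiv 𝓘(ℝ, ℝ) 𝓘(ℝ, E) (fun t => Φ (t, x)) 0
      = (1 : ℝ →L[ℝ] ℝ).smulRight (X x) := (hXΦ x).mfderiv
  rw [inTangentCoordinates_eq (I := 𝓘(ℝ, ℝ)) (I' := 𝓘(ℝ, E))
      (f := fun _ : M => (0:ℝ)) (g := fun x => Φ (0, x))
      (ϕ := fun x => mfderiv 𝓘(ℝ, ℝ) 𝓘(ℝ, E) (fun t => Φ (t, x)) 0)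
      (mem_chart_source ℝ _) (by simpa [hΦ.map_zero x, hΦ.map_zero x₀] using hx)]
  have h1 : (tangentBundleCore 𝓘(ℝ, ℝ) ℝ).coordChange (achart ℝ (0:ℝ)) (achart ℝ (0:ℝ))
      (0:ℝ) (1:ℝ) = 1 :=
    (tangentBundleCore 𝓘(ℝ, ℝ) ℝ).coordChange_self (achart ℝ (0:ℝ)) (0:ℝ)
      (mem_chart_source ℝ (0:ℝ)) (1:ℝ)
  have h2 : ((1 : ℝ →L[ℝ] ℝ).smulRight (X x)) (1:ℝ) = X x := by
    simp
  simp only [ContinuousLinearMap.comp_apply, h1, hmf, hΦ.map_zero]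
  refine Eq.trans ?_
    (congrArg ((tangentBundleCore 𝓘(ℝ, E) M).coordChange (achart E x) (achart E x₀) x)
      (?_ : X x = _))
  · rfl
  · show X x = ((1 : ℝ →L[ℝ] ℝ).smulRight (X x))
      ((tangentBundleCore 𝓘(ℝ, ℝ) ℝ).coordChange (achart ℝ (0:ℝ)) (achart ℝ (0:ℝ)) (0:ℝ) (1:ℝ))
    rw [h1, h2]

/-- Two smooth local flows defined on the same open domain `D ⊆ ℝ × M` and having the same
velocity field coincide. -/
theorem local_flow_unique
    {E : Type*} [NormedAddCommGroup E] [NormedSpace ℝ E] [CompleteSpace E]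
    {M : Type*} [TopologicalSpace M] [ChartedSpace E M]
    [IsManifold 𝓘(ℝ, E) (⊤ : ℕ∞) M]
    (Φ Ψ : ℝ × M → M) (D : Set (ℝ × M))
    (hΦ : IsLocalFlow (E := E) Φ D) (hΨ : IsLocalFlow (E := E) Ψ D)
    (X : (x : M) → TangentSpace 𝓘(ℝ, E) x)
    (hXΦ : IsVelocityField X Φ) (hXΨ : IsVelocityField X Ψ) :
    Set.EqOn Φ Ψ D := by
  have hD : IsOpen D := hΦ.isOpen_dom
  have hVF := hΦ.contMDiff_velocityField hXΦ
  -- local agreement of the two flows, starting at any point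
  have hloc : ∀ y : M, ∀ᶠ δ in nhds (0:ℝ), Φ (δ, y) = Ψ (δ, y) := by
    intro y
    have hslice : {t : ℝ | (t, y) ∈ D} ∈ nhds (0:ℝ) := by
      have hc : Continuous fun t : ℝ => ((t, y) : ℝ × M) := by fun_prop
      exact hc.continuousAt.preimage_mem_nhds (hD.mem_nhds (hΦ.zero_mem y))
    have h1 : IsMIntegralCurveAt (fun δ => Φ (δ, y)) X 0 :=
      (hΦ.isIntegralCurveOn_slice hXΦ y).isMIntegralCurveAt hslice
    have h2 : IsMIntegralCurveAt (fun δ => Ψ (δ, y)) X 0 :=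
      (hΨ.isIntegralCurveOn_slice hXΨ y).isMIntegralCurveAt hslice
    exact isMIntegralCurveAt_eventuallyEq_of_contMDiffAt (t₀ := 0)
      BoundarylessManifold.isInteriorPoint (by simpa [hΦ.map_zero y] using hVF.contMDiffAt)
      h1 h2 (by simp [hΦ.map_zero y, hΨ.map_zero y])
  -- eventual domain membership facts
  have hdom : ∀ y : M, ∀ᶠ δ in nhds (0:ℝ), (δ, y) ∈ D := by
    intro y
    have hc : Continuous fun t : ℝ => ((t, y) : ℝ × M) := by fun_prop
    exact hc.continuousAt.preimage_mem_nhds (hD.mem_nhds (hΦ.zero_mem y))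
  have hdom' : ∀ y : M, ∀ᶠ δ in nhds (0:ℝ), (-δ, Ψ (δ, y)) ∈ D := by
    intro y
    have hΨc : ContinuousAt Ψ ((0:ℝ), y) :=
      (hΨ.smoothOn.continuousOn.continuousAt (hD.mem_nhds (hΨ.zero_mem y)))
    have hc : ContinuousAt (fun δ : ℝ => ((-δ, Ψ (δ, y)) : ℝ × M)) 0 := by
      apply ContinuousAt.prodMk
      · fun_prop
      · have hc2 : ContinuousAt (fun δ : ℝ => ((δ, y) : ℝ × M)) 0 := by fun_prop
        exact Filter.Tendsto.comp hΨc hc2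
    have h0 : ((-(0:ℝ), Ψ ((0:ℝ), y)) : ℝ × M) ∈ D := by
      simpa [hΨ.map_zero y] using hΨ.zero_mem y
    exact hc.preimage_mem_nhds (hD.mem_nhds h0)
  rintro ⟨t₀, x⟩ hp
  set A : Set ℝ := {t : ℝ | (t, x) ∈ D ∧ Φ (t, x) = Ψ (t, x)} with hA_def
  have hAopen : IsOpen A := by
    rw [isOpen_iff_mem_nhds]
    rintro t₁ ⟨ht₁s, ht₁eq⟩
    have hE : ∀ᶠ δ in nhds (0:ℝ),
        (δ, Φ (t₁, x)) ∈ D ∧ Φ (δ, Φ (t₁, x)) = Ψ (δ, Φ (t₁, x)) ∧ (t₁ + δ, x) ∈ D := by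
      have hc : Continuous fun δ : ℝ => ((t₁ + δ, x) : ℝ × M) := by fun_prop
      have h3 : ∀ᶠ δ in nhds (0:ℝ), (t₁ + δ, x) ∈ D := by
        refine hc.continuousAt.preimage_mem_nhds ?_
        simpa using hD.mem_nhds ht₁s
      filter_upwards [hdom (Φ (t₁, x)), hloc (Φ (t₁, x)), h3] with δ h1 h2 h3
      exact ⟨h1, h2, h3⟩
    have hshift : Filter.Tendsto (fun u : ℝ => u - t₁) (nhds t₁) (nhds 0) := by
      have : Filter.Tendsto (fun u : ℝ => u - t₁) (nhds t₁) (nhds (t₁ - t₁)) :=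
        (continuous_id.sub continuous_const).continuousAt
      simpa using this
    filter_upwards [hshift.eventually hE] with u hu
    obtain ⟨h1, h2, h3⟩ := hu
    rw [add_sub_cancel] at h3
    have e1 : Φ (u - t₁, Φ (t₁, x)) = Φ (u, x) := by
      have := hΦ.comp t₁ (u - t₁) x ht₁s h1 (by rwa [add_sub_cancel])
      rwa [add_sub_cancel] at this
    have e2 : Ψ (u - t₁, Ψ (t₁, x)) = Ψ (u, x) := by
      have := hΨ.comp t₁ (u - t₁) x ht₁s (by rwa [← ht₁eq]) (by rwa [add_sub_cancel])
      rwa [add_sub_cancel] at this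
    refine ⟨h3, ?_⟩
    rw [← e1, ← e2, ← ht₁eq, h2]
  have hAclosed : closure A ∩ {t : ℝ | (t, x) ∈ D} ⊆ A := by
    rintro τ ⟨hτcl, hτs⟩
    set y₁ := Φ (τ, x) with hy₁
    set y₂ := Ψ (τ, x) with hy₂
    have hE : ∀ᶠ δ in nhds (0:ℝ),
        Φ (δ, y₁) = Ψ (δ, y₁) ∧ (δ, y₁) ∈ D ∧ (δ, y₂) ∈ D ∧ (τ + δ, x) ∈ D ∧
          (-δ, Ψ (δ, y₁)) ∈ D ∧ (-δ, Ψ (δ, y₂)) ∈ D := by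
      have hc : Continuous fun δ : ℝ => ((τ + δ, x) : ℝ × M) := by fun_prop
      have h4 : ∀ᶠ δ in nhds (0:ℝ), (τ + δ, x) ∈ D := by
        refine hc.continuousAt.preimage_mem_nhds ?_
        simpa using hD.mem_nhds hτs
      filter_upwards [hloc y₁, hdom y₁, hdom y₂, h4, hdom' y₁, hdom' y₂] with
        δ h1 h2 h3 h4 h5 h6
      exact ⟨h1, h2, h3, h4, h5, h6⟩
    have hshift : Filter.Tendsto (fun u : ℝ => u - τ) (nhds τ) (nhds 0) := by
      have : Filter.Tendsto (fun u : ℝ => u - τ) (nhds τ) (nhds (τ - τ)) :=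
        (continuous_id.sub continuous_const).continuousAt
      simpa using this
    obtain ⟨u, huE, huA⟩ := mem_closure_iff_nhds.mp hτcl _ (hshift.eventually hE)
    obtain ⟨h1, h2, h3, h4, h5, h6⟩ := huE
    set δ := u - τ with hδ
    have hτδ : τ + δ = u := by rw [hδ]; ring
    rw [hτδ] at h4
    have e1 : Φ (δ, y₁) = Φ (u, x) := by
      have := hΦ.comp τ δ x hτs h2 (by rwa [hτδ])
      rwa [hτδ] at this
    have e2 : Ψ (δ, y₂) = Ψ (u, x) := by
      have := hΨ.comp τ δ x hτs h3 (by rwa [hτδ])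
      rwa [hτδ] at this
    have hz : Ψ (δ, y₁) = Ψ (δ, y₂) := by
      rw [← h1, e1, e2, huA.2]
    have e3 : Ψ (-δ, Ψ (δ, y₁)) = y₁ := by
      have := hΨ.comp δ (-δ) y₁ h2 h5 (by simpa [add_neg_cancel] using hΨ.zero_mem y₁)
      rwa [add_neg_cancel, hΨ.map_zero y₁] at this
    have e4 : Ψ (-δ, Ψ (δ, y₂)) = y₂ := by
      have := hΨ.comp δ (-δ) y₂ h3 h6 (by simpa [add_neg_cancel] using hΨ.zero_mem y₂)
      rwa [add_neg_cancel, hΨ.map_zero y₂] at this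
    refine ⟨hτs, ?_⟩
    show y₁ = y₂
    calc y₁ = Ψ (-δ, Ψ (δ, y₁)) := e3.symm
      _ = Ψ (-δ, Ψ (δ, y₂)) := by rw [hz]
      _ = y₂ := e4
  have hpre : IsPreconnected {t : ℝ | (t, x) ∈ D} :=
    (hΦ.ordConnected_slice x).isPreconnected
  have hsub : {t : ℝ | (t, x) ∈ D} ⊆ A :=
    hpre.subset_of_closure_inter_subset hAopen
      ⟨0, hΦ.zero_mem x, hΦ.zero_mem x, by rw [hΦ.map_zero x, hΨ.map_zero x]⟩ hAclosed
  exact (hsub hp).2
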